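/- arXiv:1012.2630 — 2 statements merged into one kernel-verified Lean document; each statement's English description precedes it below -/
import Mathlib

section
/- For the four-qubit GHZ state u = [1,1,1,1] + [2,2,2,2], one has ñ₁₉(u) = 6; and for the cluster-type state u' = [1,1,1,1] + [1,1,2,2] + [1,2,1,1] + [1,2,1,2] + [2,1,1,1] + [2,1,2,1] + [2,2,2,2] (the representative of class C₈₂), one has ñ₁₉(u') = 3. -/
/-!
For the GHZ state the contraction conditions say exactly that `w` vanishes at every index in
which at most one coordinate differs from the others, so the solutions are the arrays supported
on the six indices with two `0`s and two `1`s. For the `C₈₂` representative the sixteen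
conditions have rank `13`: a solution is determined by its coordinates at `(1,1,0,0)`,
`(1,1,0,1)` and `(1,1,1,1)`, and each choice of these extends to a solution. In both cases the
dimension is counted by coordinate functionals that separate the solution space and are
biorthogonal to an explicit family of solutions.
-/

/-- Solution space of the four simultaneous contraction conditions defining
the intersection invariant `ñ₁₉` of four qubits. -/
def S₁₉ (v : Fin 2 → Fin 2 → Fin 2 → Fin 2 → ℝ) :
    Submodule ℝ (Fin 2 → Fin 2 → Fin 2 → Fin 2 → ℝ) where
  carrier := { w |
    (∀ j₁ k₁, ∑ j₂, ∑ j₃, ∑ j₄, v j₁ j₂ j₃ j₄ * w k₁ j₂ j₃ j₄ = 0) ∧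
    (∀ j₂ k₂, ∑ j₁, ∑ j₃, ∑ j₄, v j₁ j₂ j₃ j₄ * w j₁ k₂ j₃ j₄ = 0) ∧
    (∀ j₃ k₃, ∑ j₁, ∑ j₂, ∑ j₄, v j₁ j₂ j₃ j₄ * w j₁ j₂ k₃ j₄ = 0) ∧
    (∀ j₄ k₄, ∑ j₁, ∑ j₂, ∑ j₃, v j₁ j₂ j₃ j₄ * w j₁ j₂ j₃ k₄ = 0) }
  zero_mem' := by
    refine ⟨?_, ?_, ?_, ?_⟩ <;> intro a b <;> simp
  add_mem' := by
    rintro a b ⟨ha1, ha2, ha3, ha4⟩ ⟨hb1, hb2, hb3, hb4⟩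
    refine ⟨fun p q => ?_, fun p q => ?_, fun p q => ?_, fun p q => ?_⟩ <;>
      simp only [Pi.add_apply, mul_add, Finset.sum_add_distrib]
    · rw [ha1 p q, hb1 p q, add_zero]
    · rw [ha2 p q, hb2 p q, add_zero]
    · rw [ha3 p q, hb3 p q, add_zero]
    · rw [ha4 p q, hb4 p q, add_zero]
  smul_mem' := by
    rintro c a ⟨ha1, ha2, ha3, ha4⟩
    have hc : ∀ x y : ℝ, x * (c * y) = c * (x * y) := fun x y => mul_left_comm x c y
    refine ⟨fun p q => ?_, fun p q => ?_, fun p q => ?_, fun p q => ?_⟩ <;>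
      simp only [Pi.smul_apply, smul_eq_mul, hc, ← Finset.mul_sum]
    · rw [ha1 p q, mul_zero]
    · rw [ha2 p q, mul_zero]
    · rw [ha3 p q, mul_zero]
    · rw [ha4 p q, mul_zero]

/-- `ñ₁₉(v)`: the dimension of `S₁₉ v`. -/
noncomputable def n₁₉ (v : Fin 2 → Fin 2 → Fin 2 → Fin 2 → ℝ) : ℕ :=
  Module.finrank ℝ (S₁₉ v)

/-- The basis array `[a,b,c,d]`: equal to `1` at index `(a,b,c,d)` and `0`
elsewhere.  The paper's indices `1, 2` correspond to `0, 1 : Fin 2`. -/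
def e (a b c d : Fin 2) : Fin 2 → Fin 2 → Fin 2 → Fin 2 → ℝ :=
  fun i j k l => if i = a ∧ j = b ∧ k = c ∧ l = d then 1 else 0

open Module

theorem Submodule.finrank_eq_card_of_biorthogonal {K M ι : Type*} [Field K] [AddCommGroup M]
    [Module K M] [Fintype ι] {S : Submodule K M} (b : ι → M) (f : ι → Dual K M)
    (hb : ∀ i, b i ∈ S) (hoff : ∀ i j, i ≠ j → f i (b j) = 0) (hdiag : ∀ i, f i (b i) ≠ 0)
    (hsep : ∀ w ∈ S, (∀ i, f i w = 0) → w = 0) : finrank K S = Fintype.card ι := by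
  classical
  let g : S →ₗ[K] ι → K := LinearMap.pi fun i => (f i).comp S.subtype
  have hg : Function.Bijective g := by
    refine ⟨(injective_iff_map_eq_zero g).2 fun w hw => ?_, fun c => ?_⟩
    · exact Subtype.ext <| hsep w w.2 fun i => congrFun hw i
    · refine ⟨⟨∑ i, (c i / f i (b i)) • b i, S.sum_mem fun i _ => S.smul_mem _ (hb i)⟩, ?_⟩
      ext j
      simp only [g, LinearMap.pi_apply, LinearMap.coe_comp, Function.comp_apply,
        Submodule.subtype_apply, map_sum, map_smul, smul_eq_mul]
      rw [Finset.sum_eq_single j (fun i _ hij => by rw [hoff j i (Ne.symm hij), mul_zero])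
        (by simp), div_mul_cancel₀ _ (hdiag j)]
  rw [(LinearEquiv.ofBijective g hg).finrank_eq, Module.finrank_fintype_fun_eq_card]

def ghzState : Fin 2 → Fin 2 → Fin 2 → Fin 2 → ℝ :=
  e 0 0 0 0 + e 1 1 1 1

def c82State : Fin 2 → Fin 2 → Fin 2 → Fin 2 → ℝ :=
  e 0 0 0 0 + e 0 0 1 1 + e 0 1 0 0 + e 0 1 0 1 + e 1 0 0 0 + e 1 0 1 0 + e 1 1 1 1

def coord (a b c d : Fin 2) : Dual ℝ (Fin 2 → Fin 2 → Fin 2 → Fin 2 → ℝ) :=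
  LinearMap.proj d ∘ₗ LinearMap.proj c ∘ₗ LinearMap.proj b ∘ₗ LinearMap.proj a

@[simp]
theorem coord_apply (a b c d : Fin 2) (w : Fin 2 → Fin 2 → Fin 2 → Fin 2 → ℝ) :
    coord a b c d w = w a b c d :=
  rfl

theorem mem_S₁₉_ghzState_iff (w : Fin 2 → Fin 2 → Fin 2 → Fin 2 → ℝ) :
    w ∈ S₁₉ ghzState ↔ ∀ j k, w k j j j = 0 ∧ w j k j j = 0 ∧ w j j k j = 0 ∧ w j j j k = 0 := by
  simp only [S₁₉, Submodule.mem_mk, AddSubmonoid.mem_mk, AddSubsemigroup.mem_mk, Set.mem_ofPred_eq,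
    Fin.forall_fin_two, Fin.sum_univ_two, ghzState, e, Pi.add_apply]
  norm_num
  tauto

theorem mem_S₁₉_c82State_iff (w : Fin 2 → Fin 2 → Fin 2 → Fin 2 → ℝ) :
    w ∈ S₁₉ c82State ↔
      -- one block per position `i`, each listing `(j, k) = (0, 0), (0, 1), (1, 0), (1, 1)`
      (w 0 0 0 0 + w 0 0 1 1 + w 0 1 0 0 + w 0 1 0 1 = 0 ∧
        w 1 0 0 0 + w 1 0 1 1 + w 1 1 0 0 + w 1 1 0 1 = 0 ∧
        w 0 0 0 0 + w 0 0 1 0 + w 0 1 1 1 = 0 ∧ w 1 0 0 0 + w 1 0 1 0 + w 1 1 1 1 = 0) ∧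
      (w 0 0 0 0 + w 0 0 1 1 + w 1 0 0 0 + w 1 0 1 0 = 0 ∧
        w 0 1 0 0 + w 0 1 1 1 + w 1 1 0 0 + w 1 1 1 0 = 0 ∧
        w 0 0 0 0 + w 0 0 0 1 + w 1 0 1 1 = 0 ∧ w 0 1 0 0 + w 0 1 0 1 + w 1 1 1 1 = 0) ∧
      (w 0 0 0 0 + w 0 1 0 0 + w 0 1 0 1 + w 1 0 0 0 = 0 ∧
        w 0 0 1 0 + w 0 1 1 0 + w 0 1 1 1 + w 1 0 1 0 = 0 ∧
        w 0 0 0 1 + w 1 0 0 0 + w 1 1 0 1 = 0 ∧ w 0 0 1 1 + w 1 0 1 0 + w 1 1 1 1 = 0) ∧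
      (w 0 0 0 0 + w 0 1 0 0 + w 1 0 0 0 + w 1 0 1 0 = 0 ∧
        w 0 0 0 1 + w 0 1 0 1 + w 1 0 0 1 + w 1 0 1 1 = 0 ∧
        w 0 0 1 0 + w 0 1 0 0 + w 1 1 1 0 = 0 ∧ w 0 0 1 1 + w 0 1 0 1 + w 1 1 1 1 = 0) := by
  simp only [S₁₉, Submodule.mem_mk, AddSubmonoid.mem_mk, AddSubsemigroup.mem_mk, Set.mem_ofPred_eq,
    Fin.forall_fin_two, Fin.sum_univ_two, c82State, e, Pi.add_apply]
  norm_num [add_assoc, and_assoc]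

theorem n₁₉_ghzState : n₁₉ ghzState = 6 := by
  let b : Fin 6 → Fin 2 → Fin 2 → Fin 2 → Fin 2 → ℝ :=
    ![e 0 0 1 1, e 0 1 0 1, e 0 1 1 0, e 1 0 0 1, e 1 0 1 0, e 1 1 0 0]
  let f : Fin 6 → Dual ℝ (Fin 2 → Fin 2 → Fin 2 → Fin 2 → ℝ) :=
    ![coord 0 0 1 1, coord 0 1 0 1, coord 0 1 1 0, coord 1 0 0 1, coord 1 0 1 0, coord 1 1 0 0]
  refine (Submodule.finrank_eq_card_of_biorthogonal b f ?_ ?_ ?_ ?_).trans (Fintype.card_fin 6)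
  · intro i
    fin_cases i <;> simp [b, mem_S₁₉_ghzState_iff, Fin.forall_fin_two, e]
  · intro i j hij
    fin_cases i <;> fin_cases j <;> simp_all [b, f, e]
  · intro i
    fin_cases i <;> simp [b, f, e]
  · intro w hw hf
    simp only [mem_S₁₉_ghzState_iff, Fin.forall_fin_two] at hw
    simp only [Fin.forall_fin_succ, f] at hf
    funext i j k l
    fin_cases i <;> fin_cases j <;> fin_cases k <;> fin_cases l <;> simp_all

theorem n₁₉_c82State : n₁₉ c82State = 3 := by
  -- the solutions with free coordinates `(w 1 1 0 0, w 1 1 0 1, w 1 1 1 1) = 3 • Pi.single i 1`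
  let b : Fin 3 → Fin 2 → Fin 2 → Fin 2 → Fin 2 → ℝ :=
    ![e 0 0 0 0 + e 0 0 0 1 + e 0 0 1 0 - e 0 0 1 1 - e 0 1 0 0 + e 0 1 0 1
        - (2 : ℝ) • e 0 1 1 1 - e 1 0 0 0 + e 1 0 1 0 - (2 : ℝ) • e 1 0 1 1
        + (3 : ℝ) • e 1 1 0 0,
      (2 : ℝ) • e 0 0 0 0 - e 0 0 0 1 - e 0 0 1 0 - (2 : ℝ) • e 0 0 1 1
        - (2 : ℝ) • e 0 1 0 0 + (2 : ℝ) • e 0 1 0 1 - e 0 1 1 1 - (2 : ℝ) • e 1 0 0 0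
        + (2 : ℝ) • e 1 0 1 0 - e 1 0 1 1 + (3 : ℝ) • e 1 1 0 1 + (3 : ℝ) • e 1 1 1 0,
      (2 : ℝ) • e 0 0 0 0 - e 0 0 0 1 - e 0 0 1 0 + e 0 0 1 1 + e 0 1 0 0
        - (4 : ℝ) • e 0 1 0 1 + (6 : ℝ) • e 0 1 1 0 - e 0 1 1 1 + e 1 0 0 0
        + (6 : ℝ) • e 1 0 0 1 - (4 : ℝ) • e 1 0 1 0 - e 1 0 1 1 + (3 : ℝ) • e 1 1 1 1]
  let f : Fin 3 → Dual ℝ (Fin 2 → Fin 2 → Fin 2 → Fin 2 → ℝ) :=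
    ![coord 1 1 0 0, coord 1 1 0 1, coord 1 1 1 1]
  refine (Submodule.finrank_eq_card_of_biorthogonal b f ?_ ?_ ?_ ?_).trans (Fintype.card_fin 3)
  · intro i
    fin_cases i <;> norm_num [b, mem_S₁₉_c82State_iff, e]
  · intro i j hij
    fin_cases i <;> fin_cases j <;> simp_all [b, f, e]
  · intro i
    fin_cases i <;> simp [b, f, e]
  · intro w hw hf
    rw [mem_S₁₉_c82State_iff] at hw
    simp only [Fin.forall_fin_succ, f] at hf
    funext i j k l
    fin_cases i <;> fin_cases j <;> fin_cases k <;> fin_cases l <;> simp_all <;> linarith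

/-- **Values of `ñ₁₉` on the four-qubit GHZ state and the `C₈₂`
representative.**  For `u = [1,1,1,1] + [2,2,2,2]` one has `ñ₁₉(u) = 6`, and
for `u' = [1,1,1,1] + [1,1,2,2] + [1,2,1,1] + [1,2,1,2] + [2,1,1,1]
+ [2,1,2,1] + [2,2,2,2]` one has `ñ₁₉(u') = 3`. -/
theorem four_qubit_n19_values :
    n₁₉ (e 0 0 0 0 + e 1 1 1 1) = 6 ∧
    n₁₉ (e 0 0 0 0 + e 0 0 1 1 + e 0 1 0 0 + e 0 1 0 1 + e 1 0 0 0
      + e 1 0 1 0 + e 1 1 1 1) = 3 :=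
  ⟨n₁₉_ghzState, n₁₉_c82State⟩
end

section
/- The four-qubit GHZ state u = [1,1,1,1] + [2,2,2,2] and the cluster-type state u' = [1,1,1,1] + [1,1,2,2] + [1,2,1,1] + [1,2,1,2] + [2,1,1,1] + [2,1,2,1] + [2,2,2,2] lie in distinct orbits of GL₂(ℝ)⁴: there is no quadruple of invertible 2×2 real matrices (g₁, g₂, g₃, g₄) with g·u = u'. -/
/-- Action of a quadruple of matrices on a four-qubit coordinate array:
`(g·v) j₁ j₂ j₃ j₄ = ∑ k₁ k₂ k₃ k₄,
  v k₁ k₂ k₃ k₄ * g₁ k₁ j₁ * g₂ k₂ j₂ * g₃ k₃ j₃ * g₄ k₄ j₄`. -/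
def act₄ (g₁ g₂ g₃ g₄ : Matrix (Fin 2) (Fin 2) ℝ)
    (v : Fin 2 → Fin 2 → Fin 2 → Fin 2 → ℝ) :
    Fin 2 → Fin 2 → Fin 2 → Fin 2 → ℝ :=
  fun j₁ j₂ j₃ j₄ => ∑ k₁, ∑ k₂, ∑ k₃, ∑ k₄,
    v k₁ k₂ k₃ k₄ * g₁ k₁ j₁ * g₂ k₂ j₂ * g₃ k₃ j₃ * g₄ k₄ j₄

open Matrix
open scoped Kronecker

def flatten {ι R : Type*} (v : ι → ι → ι → ι → R) : Matrix (ι × ι) (ι × ι) R :=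
  Matrix.of fun p q => v p.1 p.2 q.1 q.2

theorem flatten_act₄ (g₁ g₂ g₃ g₄ : Matrix (Fin 2) (Fin 2) ℝ)
    (v : Fin 2 → Fin 2 → Fin 2 → Fin 2 → ℝ) :
    flatten (act₄ g₁ g₂ g₃ g₄ v) = (g₁ ⊗ₖ g₂)ᵀ * flatten v * (g₃ ⊗ₖ g₄) := by
  ext ⟨j₁, j₂⟩ ⟨j₃, j₄⟩
  simp only [flatten, act₄, of_apply, mul_apply, transpose_apply, kronecker_apply,
    Fintype.sum_prod_type, Fin.sum_univ_two]
  ring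

theorem det_flatten_act₄ (g₁ g₂ g₃ g₄ : Matrix (Fin 2) (Fin 2) ℝ)
    (v : Fin 2 → Fin 2 → Fin 2 → Fin 2 → ℝ) :
    (flatten (act₄ g₁ g₂ g₃ g₄ v)).det =
      (g₁ ⊗ₖ g₂).det * (flatten v).det * (g₃ ⊗ₖ g₄).det := by
  rw [flatten_act₄, det_mul, det_mul, det_transpose]

theorem det_flatten_ghz : (flatten (e 0 0 0 0 + e 1 1 1 1)).det = 0 :=
  det_eq_zero_of_row_eq_zero (0, 1) fun _ => by simp [flatten, e]

theorem det_flatten_cluster_ne_zero :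
    (flatten (e 0 0 0 0 + e 0 0 1 1 + e 0 1 0 0 + e 0 1 0 1 + e 1 0 0 0
      + e 1 0 1 0 + e 1 1 1 1)).det ≠ 0 := by
  refine det_ne_zero_of_right_inverse (B := flatten
    (e 0 0 0 0 - e 0 0 1 1 - e 0 1 0 0 + e 0 1 0 1 + e 0 1 1 1
      - e 1 0 0 0 + e 1 0 1 0 + e 1 0 1 1 + e 1 1 1 1)) ?_
  ext ⟨i₁, i₂⟩ ⟨j₁, j₂⟩
  fin_cases i₁ <;> fin_cases i₂ <;> fin_cases j₁ <;> fin_cases j₂ <;>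
    simp [flatten, e, mul_apply, Fintype.sum_prod_type, one_apply]

/-- **The four-qubit GHZ state and the cluster-type state `C₈₂` are
inequivalent** under `GL₂(ℝ)⁴`: no quadruple of invertible `2×2` real
matrices carries `[1,1,1,1] + [2,2,2,2]` to
`[1,1,1,1] + [1,1,2,2] + [1,2,1,1] + [1,2,1,2] + [2,1,1,1] + [2,1,2,1]
+ [2,2,2,2]`. -/
theorem ghz_not_equivalent_to_cluster :
    ¬ ∃ g₁ g₂ g₃ g₄ : Matrix.GeneralLinearGroup (Fin 2) ℝ,
        act₄ (g₁ : Matrix (Fin 2) (Fin 2) ℝ) (g₂ : Matrix (Fin 2) (Fin 2) ℝ)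
          (g₃ : Matrix (Fin 2) (Fin 2) ℝ) (g₄ : Matrix (Fin 2) (Fin 2) ℝ)
          (e 0 0 0 0 + e 1 1 1 1)
        = e 0 0 0 0 + e 0 0 1 1 + e 0 1 0 0 + e 0 1 0 1 + e 1 0 0 0
          + e 1 0 1 0 + e 1 1 1 1 := by
  rintro ⟨g₁, g₂, g₃, g₄, h⟩
  apply det_flatten_cluster_ne_zero
  rw [← h, det_flatten_act₄, det_flatten_ghz, mul_zero, zero_mul]
end
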